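/- arXiv:2103.17140 — 3 statements merged into one kernel-verified Lean document; each statement's English description precedes it below -/
import Mathlib

section
/- Let n ≥ 1 and let S ⊆ Z_n be such that no k ∈ Z_n satisfies both k ∈ S and −k ∈ S. Suppose that (a) for every k ∈ Z_n there exist x, y ∈ S ∪ {0} with k ≡ x + y (mod n) or k ≡ −(x + y) (mod n), and (b) for every s ∈ S and all x, y ∈ S ∪ {0}: if 2s ≡ x + y (mod n) then x = y = s, and 2s ≢ −(x + y) (mod n). Then the oriented circulant graph C(n,S) is a deeply critical oriented clique. -/
/-- An oriented graph: a directed graph whose arc relation is irreflexive and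
antisymmetric (no loops, and never both arcs `xy` and `yx`). -/
structure OrientedGraph (V : Type) where
  adj : V → V → Prop
  irrefl : ∀ v, ¬ adj v v
  antisymm : ∀ u v, adj u v → ¬ adj v u

namespace OrientedGraph

variable {V : Type}

/-- An oriented `k`-colouring of `G`. -/
def IsColoring (G : OrientedGraph V) {k : ℕ} (φ : V → Fin k) : Prop :=
  (∀ x y, G.adj x y → φ x ≠ φ y) ∧
  (∀ x y u v, G.adj x y → G.adj u v → φ x = φ v → φ y ≠ φ u)

/-- The oriented chromatic number: the least `k` admitting an oriented `k`-colouring. -/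
noncomputable def chromNum (G : OrientedGraph V) : ℕ :=
  sInf {k : ℕ | ∃ φ : V → Fin k, G.IsColoring φ}

/-- `G` with the arc `xy` removed. -/
def deleteArc (G : OrientedGraph V) (x y : V) : OrientedGraph V where
  adj a b := G.adj a b ∧ ¬(a = x ∧ b = y)
  irrefl v h := G.irrefl v h.1
  antisymm u v h h' := G.antisymm u v h.1 h'.1

/-- An absolute oriented clique: `χo(G) = |V(G)|`. -/
def IsAbsoluteClique (G : OrientedGraph V) : Prop :=
  G.chromNum = Nat.card V

/-- A deeply critical oriented graph: removing any arc drops `χo` by exactly 2. -/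
def IsDeeplyCritical (G : OrientedGraph V) : Prop :=
  ∀ x y, G.adj x y → (G.deleteArc x y).chromNum = G.chromNum - 2

/-- A deeply critical oriented clique. -/
def IsDeeplyCriticalClique (G : OrientedGraph V) : Prop :=
  G.IsDeeplyCritical ∧ G.IsAbsoluteClique

/-- An extending partition `X 0 ⊔ X 1 ⊔ X 2` of `G` (indices mod 3). -/
def IsExtendingPartition (G : OrientedGraph V) (X : Fin 3 → Set V) : Prop :=
  (∀ v : V, ∃! i : Fin 3, v ∈ X i) ∧
  (∀ i : Fin 3, ∀ u ∈ X (i + 1), ∀ v ∈ X i, ¬ G.adj u v) ∧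
  (∀ i : Fin 3, ∀ u ∈ X i, ∃ v ∈ X (i + 1), {w | w ∈ X i ∧ G.adj w v} = {u}) ∧
  (∀ i : Fin 3, ∀ v ∈ X (i + 1), ∃ u ∈ X i, {w | w ∈ X (i + 1) ∧ G.adj u w} = {v})

/-- An oriented graph is extendable when it admits an extending partition. -/
def Extendable (G : OrientedGraph V) : Prop :=
  ∃ X : Fin 3 → Set V, G.IsExtendingPartition X

/-- Induced subgraph on the vertices satisfying `P`. -/
def induce (G : OrientedGraph V) (P : V → Prop) : OrientedGraph {v // P v} where
  adj a b := G.adj a.1 b.1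
  irrefl a := G.irrefl a.1
  antisymm a b h := G.antisymm a.1 b.1 h

end OrientedGraph

/-- The new vertex `xᵢ⁻` of the 6-extension (for `i ∈ Fin 3`, representing `X_{i+1}`). -/
abbrev xminus (i : Fin 3) : Fin 6 := ⟨2 * i.1, by omega⟩

/-- The new vertex `xᵢ⁺` of the 6-extension. -/
abbrev xplus (i : Fin 3) : Fin 6 := ⟨2 * i.1 + 1, by omega⟩

/-- The arcs among the six new vertices:
`x₁⁻x₂⁺, x₁⁺x₂⁻, x₂⁻x₃⁺, x₂⁺x₃⁻, x₃⁻x₁⁺, x₃⁺x₁⁻`. -/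
abbrev extraAdj (s t : Fin 6) : Prop :=
  ∃ i : Fin 3, (s = xminus i ∧ t = xplus (i + 1)) ∨ (s = xplus i ∧ t = xminus (i + 1))

lemma extra_irrefl : ∀ s : Fin 6, ¬ extraAdj s s := by decide

lemma extra_antisymm : ∀ s t : Fin 6, extraAdj s t → ¬ extraAdj t s := by decide

/-- The 6-extension of `G` with respect to the partition `X`. -/
def sixExtension {V : Type} (G : OrientedGraph V) (X : Fin 3 → Set V) :
    OrientedGraph (V ⊕ Fin 6) where
  adj a b :=
    match a, b with
    | Sum.inl u, Sum.inl v => G.adj u v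
    | Sum.inr s, Sum.inl v => ∃ i : Fin 3, s = xminus i ∧ v ∈ X i
    | Sum.inl u, Sum.inr s => ∃ i : Fin 3, s = xplus i ∧ u ∈ X i
    | Sum.inr s, Sum.inr t => extraAdj s t
  irrefl v := by
    cases v with
    | inl u => exact G.irrefl u
    | inr s => exact extra_irrefl s
  antisymm a b h h' := by
    cases a with
    | inl u =>
      cases b with
      | inl v => exact G.antisymm u v h h'
      | inr s =>
        obtain ⟨i, hi, -⟩ := h
        obtain ⟨j, hj, -⟩ := h'
        have := congrArg Fin.val (hi.symm.trans hj)
        simp at this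
        omega
    | inr s =>
      cases b with
      | inl v =>
        obtain ⟨i, hi, -⟩ := h
        obtain ⟨j, hj, -⟩ := h'
        have := congrArg Fin.val (hi.symm.trans hj)
        simp at this
        omega
      | inr t => exact extra_antisymm s t h h'

/-- The 4-extension of `G`: the subgraph of the 6-extension induced by deleting
`x₁⁺` and `x₂⁻`. -/
def fourExtension {V : Type} (G : OrientedGraph V) (X : Fin 3 → Set V) :
    OrientedGraph {v : V ⊕ Fin 6 // v ≠ Sum.inr (xplus 0) ∧ v ≠ Sum.inr (xminus 1)} :=
  (sixExtension G X).induce _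

/-- The 2-extension of `G`: the subgraph of the 6-extension induced by deleting
`x₁⁻`, `x₂⁺`, `x₃⁻` and `x₃⁺`. -/
def twoExtension {V : Type} (G : OrientedGraph V) (X : Fin 3 → Set V) :
    OrientedGraph {v : V ⊕ Fin 6 //
      v ≠ Sum.inr (xminus 0) ∧ v ≠ Sum.inr (xplus 1) ∧
      v ≠ Sum.inr (xminus 2) ∧ v ≠ Sum.inr (xplus 2)} :=
  (sixExtension G X).induce _

/-- The oriented circulant graph `C(n, S)`: vertex set `ZMod n`, with an arc from `i`
to `j` whenever `j - i ∈ S`. -/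
def circulant (n : ℕ) (S : Set (ZMod n)) (hS : ∀ k : ZMod n, k ∈ S → -k ∉ S) :
    OrientedGraph (ZMod n) where
  adj i j := j - i ∈ S
  irrefl i h := hS (i - i) h (by simpa using h)
  antisymm i j h h' := hS (j - i) h (by simpa [neg_sub] using h')

/-!
Condition (a) says that any two distinct vertices of `C(n, S)` are joined by an arc or a
directed 2-path, so every oriented colouring is injective and `χo = n`. Deleting an arc `xy`
lowers `χo` by at most 2, because `x` and `y` can be given two fresh colours. Conversely, for
the arc from `x` to `x + s`, condition (b) makes the classes `{x, x + 2s}` and `{x - s, x + s}`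
(all other classes singletons) an oriented `(n - 2)`-colouring of `C(n, S) - xy`: no arc lies
inside a class, every arc between the two classes points into `{x, x + 2s}`, and the only
directed 2-paths joining two vertices of one class, `x → x + s → x + 2s` and
`x - s → x → x + s`, both use the deleted arc.
-/

namespace OrientedGraph

variable {V : Type} {G : OrientedGraph V}

def ReachWithinTwo (G : OrientedGraph V) (u v : V) : Prop :=
  G.adj u v ∨ ∃ w, G.adj u w ∧ G.adj w v

lemma IsColoring.ne_of_reachWithinTwo {k : ℕ} {φ : V → Fin k} (hφ : G.IsColoring φ) {u v : V}
    (h : G.ReachWithinTwo u v) : φ u ≠ φ v := by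
  rcases h with h | ⟨w, huw, hwv⟩
  · exact hφ.1 u v h
  · exact fun h => hφ.2 u w w v huw hwv h rfl

lemma IsColoring.injective {k : ℕ} {φ : V → Fin k} (hφ : G.IsColoring φ)
    (hG : ∀ u v, u ≠ v → G.ReachWithinTwo u v ∨ G.ReachWithinTwo v u) :
    Function.Injective φ := by
  intro u v huv
  by_contra hne
  rcases hG u v hne with h | h
  · exact hφ.ne_of_reachWithinTwo h huv
  · exact hφ.ne_of_reachWithinTwo h huv.symm

lemma exists_isColoring_of_mapsTo {W : Type*} (ψ : V → W) (T : Finset W) (hT : ∀ v, ψ v ∈ T)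
    (h₁ : ∀ a b, G.adj a b → ψ a ≠ ψ b)
    (h₂ : ∀ a b u v, G.adj a b → G.adj u v → ψ a = ψ v → ψ b ≠ ψ u) :
    ∃ φ : V → Fin T.card, G.IsColoring φ := by
  have hφ : ∀ p q, T.equivFin ⟨ψ p, hT p⟩ = T.equivFin ⟨ψ q, hT q⟩ → ψ p = ψ q := by
    simp
  exact ⟨fun v => T.equivFin ⟨ψ v, hT v⟩, fun a b hab h => h₁ a b hab (hφ a b h),
    fun a b u v hab huv h h' => h₂ a b u v hab huv (hφ a v h) (hφ b u h')⟩

lemma chromNum_le_of_mapsTo {W : Type*} (ψ : V → W) (T : Finset W) (hT : ∀ v, ψ v ∈ T)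
    (h₁ : ∀ a b, G.adj a b → ψ a ≠ ψ b)
    (h₂ : ∀ a b u v, G.adj a b → G.adj u v → ψ a = ψ v → ψ b ≠ ψ u) :
    G.chromNum ≤ T.card :=
  Nat.sInf_le (exists_isColoring_of_mapsTo ψ T hT h₁ h₂)

lemma exists_isColoring_card [Fintype V] : ∃ φ : V → Fin (Fintype.card V), G.IsColoring φ := by
  classical
  simpa using exists_isColoring_of_mapsTo (G := G) id Finset.univ (fun _ => Finset.mem_univ _)
    (fun a b hab (h : a = b) => G.irrefl a (h ▸ hab))
    (fun a b u v hab huv hav hbu => by subst hav hbu; exact G.antisymm a b hab huv)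

lemma chromNum_le_card [Fintype V] : G.chromNum ≤ Fintype.card V :=
  Nat.sInf_le exists_isColoring_card

lemma exists_isColoring_chromNum [Fintype V] : ∃ φ : V → Fin G.chromNum, G.IsColoring φ :=
  Nat.sInf_mem (s := {k : ℕ | ∃ φ : V → Fin k, G.IsColoring φ}) ⟨_, exists_isColoring_card⟩

lemma isAbsoluteClique_of_reachWithinTwo [Fintype V]
    (hG : ∀ u v, u ≠ v → G.ReachWithinTwo u v ∨ G.ReachWithinTwo v u) : G.IsAbsoluteClique := by
  obtain ⟨φ, hφ⟩ := G.exists_isColoring_chromNum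
  have hle := Fintype.card_le_of_injective φ (hφ.injective hG)
  rw [Fintype.card_fin] at hle
  rw [IsAbsoluteClique, Nat.card_eq_fintype_card]
  exact le_antisymm chromNum_le_card hle

lemma chromNum_le_chromNum_deleteArc_add_two [Fintype V] (x y : V) :
    G.chromNum ≤ (G.deleteArc x y).chromNum + 2 := by
  classical
  obtain ⟨φ, hφ⟩ := (G.deleteArc x y).exists_isColoring_chromNum
  let ψ : V → Fin _ ⊕ Fin 2 := fun v =>
    if v = x then .inr 0 else if v = y then .inr 1 else .inl (φ v)
  have key : ∀ p q, ψ p = ψ q → φ p = φ q ∧ (p = q ∨ p ≠ x ∧ p ≠ y ∧ q ≠ x ∧ q ≠ y) := by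
    intro p q h
    simp only [ψ] at h
    split_ifs at h <;> simp_all
  have hle := chromNum_le_of_mapsTo (G := G) ψ Finset.univ (fun _ => Finset.mem_univ _) ?_ ?_
  · simpa using hle
  · intro a b hab h
    obtain ⟨hφab, rfl | ⟨ha, -⟩⟩ := key a b h
    · exact G.irrefl a hab
    · exact hφ.1 a b ⟨hab, fun h => ha h.1⟩ hφab
  · intro a b u v hab huv hav hbu
    obtain ⟨hφav, rfl | ⟨hax, -, -, hvy⟩⟩ := key a v hav
    · obtain ⟨hφbu, rfl | ⟨-, hby, hux, -⟩⟩ := key b u hbu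
      · exact G.antisymm a b hab huv
      · exact hφ.2 a b u a ⟨hab, fun h => hby h.2⟩ ⟨huv, fun h => hux h.1⟩ rfl hφbu
    · exact hφ.2 a b u v ⟨hab, fun h => hax h.1⟩ ⟨huv, fun h => hvy h.2⟩ hφav (key b u hbu).1

lemma isDeeplyCritical_of_chromNum_deleteArc_le [Fintype V]
    (h : ∀ x y, G.adj x y → (G.deleteArc x y).chromNum ≤ G.chromNum - 2) :
    G.IsDeeplyCritical := fun x y hxy =>
  le_antisymm (h x y hxy) (by have := G.chromNum_le_chromNum_deleteArc_add_two x y; omega)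

end OrientedGraph

section Circulant

open OrientedGraph

variable {n : ℕ} {S : Set (ZMod n)} {hS : ∀ k : ZMod n, k ∈ S → -k ∉ S}

@[simp]
lemma circulant_adj {i j : ZMod n} : (circulant n S hS).adj i j ↔ j - i ∈ S := Iff.rfl

lemma circulant_reachWithinTwo_of_sub_eq_add {u v p q : ZMod n} (hp : p ∈ S ∪ {0})
    (hq : q ∈ S ∪ {0}) (huv : u ≠ v) (h : v - u = p + q) :
    (circulant n S hS).ReachWithinTwo u v := by
  rcases hp with hp | rfl <;> rcases hq with hq | rfl
  · exact Or.inr ⟨u + p, by simpa using hp, by simpa [show v - (u + p) = q by linear_combination h]⟩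
  · exact Or.inl (by simpa [h] using hp)
  · exact Or.inl (by simpa [h] using hq)
  · exact absurd (by linear_combination -h) huv

lemma circulant_reachWithinTwo
    (ha : ∀ k : ZMod n, ∃ x ∈ S ∪ {0}, ∃ y ∈ S ∪ {0}, k = x + y ∨ k = -(x + y))
    (u v : ZMod n) (huv : u ≠ v) :
    (circulant n S hS).ReachWithinTwo u v ∨ (circulant n S hS).ReachWithinTwo v u := by
  obtain ⟨p, hp, q, hq, h | h⟩ := ha (v - u)
  · exact Or.inl (circulant_reachWithinTwo_of_sub_eq_add hp hq huv h)
  · exact Or.inr (circulant_reachWithinTwo_of_sub_eq_add hp hq huv.symm (by linear_combination -h))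

lemma circulant_not_adj_of_mem_pair {s c p q : ZMod n} (h₂ : 2 * s ∉ S) (h₂' : -(2 * s) ∉ S)
    (hp : p = c ∨ p = c + 2 * s) (hq : q = c ∨ q = c + 2 * s) :
    ¬ (circulant n S hS).adj p q := by
  have h₀ : (0 : ZMod n) ∉ S := fun h => hS 0 h (by simpa using h)
  rcases hp with rfl | rfl <;> rcases hq with rfl | rfl <;> simp [*]

lemma circulant_eq_of_adj_of_adj_of_mem_pair {s a b d c : ZMod n}
    (hbs : ∀ p ∈ S ∪ {0}, ∀ q ∈ S ∪ {0}, (s + s = p + q → p = s ∧ q = s) ∧ s + s ≠ -(p + q))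
    (hab : (circulant n S hS).adj a b) (hbd : (circulant n S hS).adj b d)
    (ha : a = c ∨ a = c + 2 * s) (hd : d = c ∨ d = c + 2 * s) :
    a = c ∧ b = c + s ∧ d = c + 2 * s := by
  have hsum := hbs (b - a) (Or.inl hab) (d - b) (Or.inl hbd)
  rcases ha with rfl | rfl <;> rcases hd with rfl | rfl
  · exact ((circulant n S hS).antisymm _ _ hab hbd).elim
  · exact ⟨rfl, by linear_combination (hsum.1 (by ring)).1, rfl⟩
  · exact (hsum.2 (by ring)).elim
  · exact ((circulant n S hS).antisymm _ _ hab hbd).elim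

lemma circulant_deleteArc_not_adj {s x p q : ZMod n} (hs : s ∈ S) (h₃ : -(3 * s) ∉ S)
    (hp : p = x ∨ p = x + 2 * s) (hq : q = x - s ∨ q = x - s + 2 * s) :
    ¬ ((circulant n S hS).deleteArc x (x + s)).adj p q := by
  rintro ⟨hpq, hne⟩
  rw [circulant_adj] at hpq
  rcases hp with rfl | rfl <;> rcases hq with rfl | rfl
  · exact hS s hs (by simpa using hpq)
  · exact hne ⟨rfl, by ring⟩
  · exact h₃ (by convert hpq using 1; ring)
  · exact hS s hs (by convert hpq using 1; ring)

def collapsePairs (x s v : ZMod n) : ZMod n :=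
  if v = x + 2 * s then x else if v = x - s then x + s else v

lemma collapsePairs_cases (x s v : ZMod n) :
    v = x + 2 * s ∧ collapsePairs x s v = x ∨ v = x - s ∧ collapsePairs x s v = x + s ∨
      collapsePairs x s v = v := by
  unfold collapsePairs
  split_ifs <;> simp_all

lemma eq_or_mem_pair_of_collapsePairs_eq {x s p q : ZMod n} (hs₀ : s ≠ 0)
    (h : collapsePairs x s p = collapsePairs x s q) :
    p = q ∨ ∃ c, (c = x ∨ c = x - s) ∧ (p = c ∨ p = c + 2 * s) ∧ (q = c ∨ q = c + 2 * s) := by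
  rcases collapsePairs_cases x s p with ⟨rfl, hp⟩ | ⟨rfl, hp⟩ | hp <;>
    rcases collapsePairs_cases x s q with ⟨rfl, hq⟩ | ⟨rfl, hq⟩ | hq <;> simp only [hp, hq] at h
  · exact Or.inl rfl
  · exact absurd (by linear_combination -h) hs₀
  · exact Or.inr ⟨x, Or.inl rfl, Or.inr rfl, Or.inl h.symm⟩
  · exact absurd (by linear_combination h) hs₀
  · exact Or.inl rfl
  · exact Or.inr ⟨x - s, Or.inr rfl, Or.inl rfl, Or.inr (by linear_combination -h)⟩
  · exact Or.inr ⟨x, Or.inl rfl, Or.inl h, Or.inr rfl⟩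
  · exact Or.inr ⟨x - s, Or.inr rfl, Or.inr (by linear_combination h), Or.inl rfl⟩
  · exact Or.inl h

lemma collapsePairs_mem_compl [NeZero n] {x s : ZMod n} (hs₀ : s ≠ 0) (h2s : 2 * s ≠ 0)
    (v : ZMod n) :
    collapsePairs x s v ∈ ({x + 2 * s, x - s} : Finset (ZMod n))ᶜ := by
  simp only [collapsePairs, Finset.mem_compl, Finset.mem_insert, Finset.mem_singleton, not_or]
  split_ifs with h h'
  · exact ⟨fun h => h2s (by linear_combination -h), fun h => hs₀ (by linear_combination h)⟩
  · exact ⟨fun h => hs₀ (by linear_combination -h), fun h => h2s (by linear_combination h)⟩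
  · exact ⟨h, h'⟩

lemma circulant_chromNum_deleteArc_le [NeZero n] {s : ZMod n} (hs : s ∈ S)
    (hbs : ∀ p ∈ S ∪ {0}, ∀ q ∈ S ∪ {0}, (s + s = p + q → p = s ∧ q = s) ∧ s + s ≠ -(p + q))
    (x : ZMod n) : ((circulant n S hS).deleteArc x (x + s)).chromNum ≤ n - 2 := by
  have h₀ : (0 : ZMod n) ∉ S := fun h => hS 0 h (by simpa using h)
  have hs₀ : s ≠ 0 := fun h => h₀ (h ▸ hs)
  have h0mem : (0 : ZMod n) ∈ S ∪ {0} := Or.inr rfl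
  have h₂ : 2 * s ∉ S := fun h =>
    hs₀ (by linear_combination ((hbs _ (Or.inl h) 0 h0mem).1 (by ring)).1)
  have h₂' : -(2 * s) ∉ S := fun h => (hbs _ (Or.inl h) 0 h0mem).2 (by ring)
  have h₃ : -(3 * s) ∉ S := fun h => (hbs _ (Or.inl h) s (Or.inl hs)).2 (by ring)
  have h2s : 2 * s ≠ 0 := fun h =>
    hs₀ ((hbs 0 h0mem 0 h0mem).1 (by linear_combination h)).1.symm
  have h3s : 3 * s ≠ 0 := fun h => (hbs s (Or.inl hs) 0 h0mem).2 (by linear_combination h)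
  refine (chromNum_le_of_mapsTo (collapsePairs x s) _
      (collapsePairs_mem_compl hs₀ h2s) ?_ ?_).trans ?_
  · intro a b hab h
    rcases eq_or_mem_pair_of_collapsePairs_eq hs₀ h with rfl | ⟨c, -, ha, hb⟩
    · exact (circulant n S hS).irrefl a hab.1
    · exact circulant_not_adj_of_mem_pair h₂ h₂' ha hb hab.1
  · intro a b u v hab huv hav hbu
    rcases eq_or_mem_pair_of_collapsePairs_eq hs₀ hav with rfl | ⟨c, hc, ha, hv⟩ <;>
      rcases eq_or_mem_pair_of_collapsePairs_eq hs₀ hbu with rfl | ⟨c', hc', hb, hu⟩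
    · exact ((circulant n S hS).deleteArc x (x + s)).antisymm _ _ hab huv
    · obtain ⟨rfl, rfl, rfl⟩ := circulant_eq_of_adj_of_adj_of_mem_pair hbs huv.1 hab.1 hu hb
      rcases hc' with rfl | rfl
      · exact huv.2 ⟨rfl, rfl⟩
      · exact hab.2 ⟨by ring, by ring⟩
    · obtain ⟨rfl, rfl, rfl⟩ := circulant_eq_of_adj_of_adj_of_mem_pair hbs hab.1 huv.1 ha hv
      rcases hc with rfl | rfl
      · exact hab.2 ⟨rfl, rfl⟩
      · exact huv.2 ⟨by ring, by ring⟩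
    · rcases hc with rfl | rfl <;> rcases hc' with rfl | rfl
      · exact circulant_not_adj_of_mem_pair h₂ h₂' ha hb hab.1
      · exact circulant_deleteArc_not_adj hs h₃ ha hb hab
      · exact circulant_deleteArc_not_adj hs h₃ hu hv huv
      · exact circulant_not_adj_of_mem_pair h₂ h₂' ha hb hab.1
  · rw [Finset.card_compl, ZMod.card, Finset.card_pair fun h => h3s (by linear_combination h)]

end Circulant

/-- sufficiency of the characterization of deeply critical oriented
circulant cliques. -/
theorem stmt3 (n : ℕ) (hn : 1 ≤ n) (S : Set (ZMod n))
    (hS : ∀ k : ZMod n, k ∈ S → -k ∉ S)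
    (ha : ∀ k : ZMod n, ∃ x ∈ S ∪ {0}, ∃ y ∈ S ∪ {0}, k = x + y ∨ k = -(x + y))
    (hb : ∀ s ∈ S, ∀ x ∈ S ∪ {0}, ∀ y ∈ S ∪ {0},
      (s + s = x + y → x = s ∧ y = s) ∧ s + s ≠ -(x + y)) :
    (circulant n S hS).IsDeeplyCriticalClique := by
  have : NeZero n := ⟨by omega⟩
  have hclique : (circulant n S hS).IsAbsoluteClique :=
    OrientedGraph.isAbsoluteClique_of_reachWithinTwo (circulant_reachWithinTwo ha)
  refine ⟨OrientedGraph.isDeeplyCritical_of_chromNum_deleteArc_le fun x y hxy => ?_, hclique⟩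
  obtain ⟨s, hs, rfl⟩ : ∃ s ∈ S, y = x + s := ⟨y - x, hxy, by ring⟩
  rw [hclique, Nat.card_zmod]
  exact circulant_chromNum_deleteArc_le hs (hb s hs) x
end

section
/- Let G be a deeply critical oriented clique on n vertices with extending partition X1 ⊔ X2 ⊔ X3, let G6 be its 6-extension, and let u ∈ X1. Then χo(G6 − x1⁻u) ≤ (n + 6) − 2, i.e., the oriented graph obtained from G6 by deleting the arc x1⁻u admits an oriented (n+4)-colouring. -/
/-
Deleting `x₁⁻u` lets `x₁⁻` share a colour with the vertex `v ∈ X₂` whose only in-neighbour in `X₁`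
is `u` (here `X₁, X₂, X₃` are `X 0, X 1, X 2`), and `x₃⁺` share a colour with `u`; every other vertex gets a colour of its own, so
`n + 4` colours suffice. Such a merge is an oriented colouring as soon as no merged pair is joined
by an arc or a directed 2-path and no two merged pairs are joined by arcs in opposite directions.
-/

namespace OrientedGraph

variable {V : Type}

theorem chromNum_le_of_isColoring {G : OrientedGraph V} {k : ℕ} {φ : V → Fin k}
    (hφ : G.IsColoring φ) : G.chromNum ≤ k :=
  Nat.sInf_le ⟨φ, hφ⟩

theorem deleteArc_adj {G : OrientedGraph V} {x y a b : V} :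
    (G.deleteArc x y).adj a b ↔ G.adj a b ∧ ¬(a = x ∧ b = y) :=
  Iff.rfl

theorem isColoring_of_eq_imp_mem {G : OrientedGraph V} {k : ℕ} {φ : V → Fin k}
    (M : Set (Sym2 V))
    (hφ : ∀ a b, φ a = φ b → a = b ∨ s(a, b) ∈ M)
    (harc : ∀ a b, G.adj a b → s(a, b) ∉ M)
    (hpath : ∀ a b c, G.adj a b → G.adj b c → s(a, c) ∉ M)
    (hcross : ∀ a b c d, G.adj a b → G.adj c d → s(a, d) ∈ M → s(b, c) ∉ M) :
    G.IsColoring φ := by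
  refine ⟨fun a b hab hφab => ?_, fun a b c d hab hcd had hbc => ?_⟩
  · rcases hφ a b hφab with rfl | hM
    exacts [G.irrefl a hab, harc a b hab hM]
  · rcases hφ a d had with rfl | had <;> rcases hφ b c hbc with rfl | hbc
    · exact G.antisymm a b hab hcd
    · exact hpath c a b hcd hab (Sym2.eq_swap ▸ hbc)
    · exact hpath a b d hab hcd had
    · exact hcross a b c d hab hcd had hbc

theorem IsExtendingPartition.eq_of_mem {G : OrientedGraph V} {X : Fin 3 → Set V}
    (hX : G.IsExtendingPartition X) {w : V} {i j : Fin 3} (hi : w ∈ X i) (hj : w ∈ X j) :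
    i = j :=
  (hX.1 w).unique hi hj

theorem IsExtendingPartition.exists_mem_forall_adj_imp_eq {G : OrientedGraph V} {X : Fin 3 → Set V}
    (hX : G.IsExtendingPartition X) {i : Fin 3} {u : V} (hu : u ∈ X i) :
    ∃ v ∈ X (i + 1), ∀ w ∈ X i, G.adj w v → w = u := by
  obtain ⟨v, hv, hin⟩ := hX.2.2.1 i u hu
  refine ⟨v, hv, fun w hw hwv => ?_⟩
  simpa [hin] using (show w ∈ {w | w ∈ X i ∧ G.adj w v} from ⟨hw, hwv⟩)

theorem IsExtendingPartition.not_adj {G : OrientedGraph V} {X : Fin 3 → Set V}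
    (hX : G.IsExtendingPartition X) {i : Fin 3} {a b : V} (ha : a ∈ X (i + 1)) (hb : b ∈ X i) :
    ¬ G.adj a b :=
  hX.2.1 i a ha b hb

end OrientedGraph

section SixExtension

theorem xminus_inj {i j : Fin 3} : xminus i = xminus j ↔ i = j := by
  revert i j; decide

theorem xplus_inj {i j : Fin 3} : xplus i = xplus j ↔ i = j := by
  revert i j; decide

theorem xminus_ne_xplus (i j : Fin 3) : xminus i ≠ xplus j := by
  revert i j; decide

theorem xplus_ne_xminus (i j : Fin 3) : xplus i ≠ xminus j := by
  revert i j; decide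

theorem extraAdj_xminus_left {i : Fin 3} {t : Fin 6} :
    extraAdj (xminus i) t ↔ t = xplus (i + 1) := by
  revert i t; decide

theorem extraAdj_xplus_left {i : Fin 3} {t : Fin 6} :
    extraAdj (xplus i) t ↔ t = xminus (i + 1) := by
  revert i t; decide

theorem extraAdj_xminus_right {s : Fin 6} {j : Fin 3} :
    extraAdj s (xminus j) ↔ s = xplus (j - 1) := by
  revert s j; decide

theorem extraAdj_xplus_right {s : Fin 6} {j : Fin 3} :
    extraAdj s (xplus j) ↔ s = xminus (j - 1) := by
  revert s j; decide

variable {V : Type} {G : OrientedGraph V} {X : Fin 3 → Set V}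

theorem sixExtension_adj_inl_inl {p q : V} :
    (sixExtension G X).adj (.inl p) (.inl q) ↔ G.adj p q :=
  Iff.rfl

theorem sixExtension_adj_inr_inl {s : Fin 6} {q : V} :
    (sixExtension G X).adj (.inr s) (.inl q) ↔ ∃ i, s = xminus i ∧ q ∈ X i :=
  Iff.rfl

theorem sixExtension_adj_inl_inr {p : V} {t : Fin 6} :
    (sixExtension G X).adj (.inl p) (.inr t) ↔ ∃ i, t = xplus i ∧ p ∈ X i :=
  Iff.rfl

theorem sixExtension_adj_inr_inr {s t : Fin 6} :
    (sixExtension G X).adj (.inr s) (.inr t) ↔ extraAdj s t :=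
  Iff.rfl

end SixExtension

section MergeColoring

variable {V : Type} (u v : V)

def mergeColor : V ⊕ Fin 6 → V ⊕ Fin 4
  | .inl w => .inl w
  -- `xminus 0 = 0` takes the colour of `v`, `xplus 2 = 5` that of `u`
  | .inr s => ![.inl v, .inr 0, .inr 1, .inr 2, .inr 3, .inl u] s

def mergedPairs : Set (Sym2 (V ⊕ Fin 6)) :=
  {s(.inl v, .inr (xminus 0)), s(.inl u, .inr (xplus 2))}

variable {u v}

theorem mergeColor_eq_imp (huv : u ≠ v) (a b : V ⊕ Fin 6)
    (h : mergeColor u v a = mergeColor u v b) : a = b ∨ s(a, b) ∈ mergedPairs u v := by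
  rcases a with w | s <;> rcases b with w' | s'
  · simp_all [mergeColor]
  · fin_cases s' <;> simp_all [mergeColor, mergedPairs, Fin.ext_iff]
  · fin_cases s <;> simp_all [mergeColor, mergedPairs, Fin.ext_iff]
  · fin_cases s <;> fin_cases s' <;> simp_all [mergeColor, mergedPairs, Fin.ext_iff]

theorem isColoring_mergeColor {G : OrientedGraph V} {X : Fin 3 → Set V}
    (hX : G.IsExtendingPartition X) (hu : u ∈ X 0) (hv : v ∈ X 1)
    (hin : ∀ w ∈ X 0, G.adj w v → w = u) {k : ℕ} {e : V ⊕ Fin 4 → Fin k}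
    (he : Function.Injective e) :
    ((sixExtension G X).deleteArc (.inr (xminus 0)) (.inl u)).IsColoring (e ∘ mergeColor u v) := by
  have hv0 : v ∉ X 0 := fun h => absurd (hX.eq_of_mem hv h) (by decide)
  have hv2 : v ∉ X 2 := fun h => absurd (hX.eq_of_mem hv h) (by decide)
  have hu2 : u ∉ X 2 := fun h => absurd (hX.eq_of_mem hu h) (by decide)
  have huv : u ≠ v := fun h => hv0 (h ▸ hu)
  have hvu : ¬ G.adj v u := hX.not_adj (i := 0) hv hu
  have hX02 : ∀ w ∈ X 2, ¬ G.adj u w := fun w hw => hX.not_adj (i := 2) hu hw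
  have hX0v : ∀ w ∈ X 0, w ≠ u → ¬ G.adj w v := fun w hw hwu hwv => hwu (hin w hw hwv)
  refine OrientedGraph.isColoring_of_eq_imp_mem (mergedPairs u v)
    (fun a b h => mergeColor_eq_imp huv a b (he h)) ?arc ?path ?cross <;>
    simp only [mergedPairs, Set.mem_insert_iff, Set.mem_singleton_iff, Sym2.eq_iff]
  case' arc => rintro a b hab ((⟨rfl, rfl⟩ | ⟨rfl, rfl⟩) | (⟨rfl, rfl⟩ | ⟨rfl, rfl⟩))
  case' path =>
    rintro a b c hab hbc ((⟨rfl, rfl⟩ | ⟨rfl, rfl⟩) | (⟨rfl, rfl⟩ | ⟨rfl, rfl⟩)) <;>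
      rcases b with w | s
  -- the only arcs left among `u, v, x₁⁻, x₃⁺` are `uv` and `x₃⁺x₁⁻`, both from the class of
  -- `u` to that of `v`
  case' cross =>
    rintro a b c d hab hcd ((⟨rfl, rfl⟩ | ⟨rfl, rfl⟩) | (⟨rfl, rfl⟩ | ⟨rfl, rfl⟩)) <;>
      rintro ((⟨rfl, rfl⟩ | ⟨rfl, rfl⟩) | (⟨rfl, rfl⟩ | ⟨rfl, rfl⟩))
  all_goals
    simp_all only [OrientedGraph.deleteArc_adj, sixExtension_adj_inl_inl, sixExtension_adj_inr_inl,
      sixExtension_adj_inl_inr, sixExtension_adj_inr_inr, extraAdj_xminus_left, extraAdj_xplus_left,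
      extraAdj_xminus_right, extraAdj_xplus_right, xminus_inj, xplus_inj, xminus_ne_xplus,
      xplus_ne_xminus, Fin.reduceAdd, Fin.reduceSub, Sum.inl.injEq, true_and, false_and,
      exists_const, exists_eq_left', not_false_eq_true, not_true_eq_false, ne_eq]

end MergeColoring

theorem stmt11_general (n : ℕ) (G : OrientedGraph (Fin n)) (X : Fin 3 → Set (Fin n))
    (hX : G.IsExtendingPartition X)
    (u : Fin n) (hu : u ∈ X 0) :
    ((sixExtension G X).deleteArc (Sum.inr (xminus 0)) (Sum.inl u)).chromNum
      ≤ (n + 6) - 2 := by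
  obtain ⟨v, hv, hin⟩ := hX.exists_mem_forall_adj_imp_eq hu
  calc _ ≤ n + 4 := OrientedGraph.chromNum_le_of_isColoring
          (isColoring_mergeColor hX hu hv hin finSumFinEquiv.injective)
    _ = n + 6 - 2 := by omega

/-- deleting an arc `x₁⁻u`, `u ∈ X₁`, from the 6-extension of a deeply
critical oriented clique on `n` vertices leaves oriented chromatic number at most
`(n + 6) - 2`. -/
theorem stmt11 (n : ℕ) (G : OrientedGraph (Fin n)) (X : Fin 3 → Set (Fin n))
    (hG : G.IsDeeplyCriticalClique) (hX : G.IsExtendingPartition X)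
    (u : Fin n) (hu : u ∈ X 0) :
    ((sixExtension G X).deleteArc (Sum.inr (xminus 0)) (Sum.inl u)).chromNum
      ≤ (n + 6) - 2 :=
  stmt11_general n G X hX u hu
end

section
/- The oriented graph H on vertex set {0,1,2,3,4,5,6,7,8} whose arcs are exactly 5→8, 8→2, 2→5, 2→7, 6→2, 8→3, 4→8, 0→5, 5→1, 7→0, 1→4, 3→6, 0→3, 4→7 and 6→1 is a deeply critical oriented clique on 9 vertices. -/
/-- The arcs of the example oriented graph `H` on 9 vertices. -/
def Harcs : List (Fin 9 × Fin 9) :=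
  [(5, 8), (8, 2), (2, 5), (2, 7), (6, 2), (8, 3), (4, 8), (0, 5), (5, 1), (7, 0),
   (1, 4), (3, 6), (0, 3), (4, 7), (6, 1)]

/-- The example oriented graph `H` on 9 vertices. -/
def H : OrientedGraph (Fin 9) where
  adj i j := (i, j) ∈ Harcs
  irrefl := by decide
  antisymm := by decide

/-!
Two vertices joined by a directed path of length at most two must get different colours in any
oriented colouring. In `H` every two vertices are so joined, hence `χo(H) = 9`. For each arc `xy`,
the graph `H − xy` has an explicit oriented 7-colouring, and it still contains seven vertices that
are pairwise joined by directed paths of length at most two, so `χo(H − xy) = 7`.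
-/

namespace OrientedGraph

variable {V : Type} {G : OrientedGraph V}

def JoinedWithinTwo (G : OrientedGraph V) (u v : V) : Prop :=
  G.adj u v ∨ G.adj v u ∨ ∃ w, (G.adj u w ∧ G.adj w v) ∨ (G.adj v w ∧ G.adj w u)

instance [Fintype V] [DecidableRel G.adj] (u v : V) : Decidable (G.JoinedWithinTwo u v) := by
  unfold JoinedWithinTwo; infer_instance

instance [DecidableEq V] [DecidableRel G.adj] (x y : V) : DecidableRel (G.deleteArc x y).adj :=
  fun a b => inferInstanceAs (Decidable (G.adj a b ∧ ¬(a = x ∧ b = y)))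

lemma IsColoring.ne_of_joinedWithinTwo {k : ℕ} {φ : V → Fin k} (hφ : G.IsColoring φ) {u v : V}
    (huv : G.JoinedWithinTwo u v) : φ u ≠ φ v := by
  obtain ⟨hArc, hTwoPath⟩ := hφ
  rcases huv with h | h | ⟨w, ⟨huw, hwv⟩ | ⟨hvw, hwu⟩⟩
  · exact hArc u v h
  · exact fun he => hArc v u h he.symm
  · exact fun he => hTwoPath u w w v huw hwv he rfl
  · exact fun he => hTwoPath v w w u hvw hwu he.symm rfl

lemma IsColoring.le_of_pairwise {k c : ℕ} {φ : V → Fin k} (hφ : G.IsColoring φ) (e : Fin c → V)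
    (he : ∀ i j, i ≠ j → G.JoinedWithinTwo (e i) (e j)) : c ≤ k := by
  have hinj : Function.Injective (φ ∘ e) := fun i j hij => by
    by_contra hne
    exact hφ.ne_of_joinedWithinTwo (he i j hne) hij
  simpa using Fintype.card_le_of_injective _ hinj

lemma IsColoring.chromNum_le {k : ℕ} {φ : V → Fin k} (hφ : G.IsColoring φ) : G.chromNum ≤ k :=
  Nat.sInf_le ⟨φ, hφ⟩

lemma chromNum_eq_of_isColoring_of_pairwise {k : ℕ} {φ : V → Fin k} (hφ : G.IsColoring φ)
    (e : Fin k → V) (he : ∀ i j, i ≠ j → G.JoinedWithinTwo (e i) (e j)) : G.chromNum = k :=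
  le_antisymm hφ.chromNum_le <|
    le_csInf ⟨k, φ, hφ⟩ fun _ ⟨_, hψ⟩ => hψ.le_of_pairwise e he

lemma isColoring_of_injective {k : ℕ} {φ : V → Fin k} (hφ : Function.Injective φ) :
    G.IsColoring φ :=
  ⟨fun x _ hxy he => G.irrefl x (hφ he ▸ hxy),
    fun x y _ _ hxy huv hxv hyu => G.antisymm x y hxy (hφ hxv ▸ hφ hyu ▸ huv)⟩

lemma chromNum_eq_card_of_pairwise [Finite V] (h : ∀ u v, u ≠ v → G.JoinedWithinTwo u v) :
    G.chromNum = Nat.card V := by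
  let e := Finite.equivFin V
  exact chromNum_eq_of_isColoring_of_pairwise (isColoring_of_injective e.injective) e.symm
    fun i j hij => h _ _ (e.symm.injective.ne hij)

lemma isColoring_of_forall_mem {k : ℕ} {φ : V → Fin k} (L : List (V × V))
    (hL : ∀ a b, G.adj a b → (a, b) ∈ L)
    (hArc : ∀ p ∈ L, φ p.1 ≠ φ p.2)
    (hTwoPath : ∀ p ∈ L, ∀ q ∈ L, φ p.1 = φ q.2 → φ p.2 ≠ φ q.1) : G.IsColoring φ :=
  ⟨fun a b hab => hArc (a, b) (hL a b hab),
    fun a b u v hab huv => hTwoPath (a, b) (hL a b hab) (u, v) (hL u v huv)⟩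

lemma deleteArc_adj_mem_erase [DecidableEq V] {L : List (V × V)}
    (hL : ∀ a b, G.adj a b → (a, b) ∈ L) {x y : V} (a b : V) (hab : (G.deleteArc x y).adj a b) :
    (a, b) ∈ L.erase (x, y) :=
  (List.mem_erase_of_ne fun he => hab.2 (Prod.mk.inj he)).2 (hL a b hab.1)

end OrientedGraph

open OrientedGraph

instance : DecidableRel H.adj := fun a b => inferInstanceAs (Decidable ((a, b) ∈ Harcs))

lemma H_chromNum : H.chromNum = 9 := by
  simpa using chromNum_eq_card_of_pairwise (G := H) (by decide)

lemma H_deleteArc_chromNum_eq {x y : Fin 9} {k : ℕ} (φ : Fin 9 → Fin k) (e : Fin k → Fin 9)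
    (hArc : ∀ p ∈ Harcs.erase (x, y), φ p.1 ≠ φ p.2 := by decide)
    (hTwoPath : ∀ p ∈ Harcs.erase (x, y), ∀ q ∈ Harcs.erase (x, y),
      φ p.1 = φ q.2 → φ p.2 ≠ φ q.1 := by decide)
    (he : ∀ i j, i ≠ j → (H.deleteArc x y).JoinedWithinTwo (e i) (e j) := by decide) :
    (H.deleteArc x y).chromNum = k :=
  chromNum_eq_of_isColoring_of_pairwise
    (isColoring_of_forall_mem _ (deleteArc_adj_mem_erase fun _ _ h => h) hArc hTwoPath) e he

-- Each entry is a 7-colouring of `H − xy` and seven vertices pairwise joined within two in it.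
set_option maxRecDepth 4000 in
lemma H_deleteArc_chromNum : ∀ p ∈ Harcs, (H.deleteArc p.1 p.2).chromNum = 7 := by
  simp only [Harcs, List.forall_mem_cons, List.not_mem_nil, IsEmpty.forall_iff, implies_true,
    and_true]
  exact ⟨H_deleteArc_chromNum_eq ![0, 1, 2, 3, 4, 3, 5, 6, 0] ![0, 1, 2, 3, 4, 6, 7],
    H_deleteArc_chromNum_eq ![0, 1, 2, 3, 2, 4, 5, 6, 6] ![0, 1, 3, 4, 5, 6, 7],
    H_deleteArc_chromNum_eq ![0, 1, 1, 2, 3, 4, 4, 5, 6] ![0, 1, 3, 4, 6, 7, 8],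
    H_deleteArc_chromNum_eq ![0, 1, 0, 2, 3, 4, 5, 5, 6] ![0, 1, 3, 4, 5, 6, 8],
    H_deleteArc_chromNum_eq ![0, 1, 2, 2, 3, 4, 4, 5, 6] ![0, 1, 3, 4, 5, 7, 8],
    H_deleteArc_chromNum_eq ![0, 1, 2, 3, 3, 4, 5, 6, 5] ![0, 1, 2, 4, 5, 6, 7],
    H_deleteArc_chromNum_eq ![0, 1, 2, 3, 2, 4, 5, 6, 1] ![0, 1, 2, 3, 5, 6, 7],
    H_deleteArc_chromNum_eq ![0, 0, 1, 2, 3, 4, 5, 4, 6] ![1, 2, 3, 4, 6, 7, 8],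
    H_deleteArc_chromNum_eq ![0, 0, 1, 2, 3, 3, 4, 5, 6] ![0, 2, 3, 4, 6, 7, 8],
    H_deleteArc_chromNum_eq ![0, 1, 0, 2, 3, 4, 5, 2, 6] ![1, 2, 3, 4, 5, 6, 8],
    H_deleteArc_chromNum_eq ![0, 1, 2, 3, 4, 4, 5, 1, 6] ![0, 2, 3, 5, 6, 7, 8],
    H_deleteArc_chromNum_eq ![0, 1, 2, 1, 3, 4, 0, 5, 6] ![0, 1, 2, 4, 5, 7, 8],
    H_deleteArc_chromNum_eq ![0, 1, 2, 3, 4, 5, 0, 3, 6] ![1, 2, 4, 5, 6, 7, 8],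
    H_deleteArc_chromNum_eq ![0, 1, 2, 3, 0, 4, 5, 1, 6] ![0, 1, 2, 3, 5, 6, 8],
    H_deleteArc_chromNum_eq ![0, 1, 2, 1, 3, 4, 3, 5, 6] ![0, 2, 3, 4, 5, 7, 8]⟩

/-- `H` is a deeply critical oriented clique on 9 vertices. -/
theorem stmt14 : H.IsDeeplyCriticalClique := by
  refine ⟨fun x y hxy => ?_, H_chromNum.trans (Nat.card_fin 9).symm⟩
  rw [H_chromNum]
  exact H_deleteArc_chromNum (x, y) hxy
end
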